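/- arXiv:cs/0601099 — 4 statements merged into one kernel-verified Lean document; each statement's English description precedes it below -/
import Mathlib

section
/- Let n be a natural number, let x ∈ ℝ^n satisfy 0 ≤ x_i ≤ 1 for all i, and let N ⊆ {1,…,n}. Then there is at most one subset V ⊆ N with |V| odd such that ∑_{i∈V} x_i − ∑_{i∈N∖V} x_i > |V| − 1. That is, if V₁ ⊆ N and V₂ ⊆ N both have odd cardinality and both violate their parity-check constraint at x, then V₁ = V₂. -/
/-- At any point `x` of the unit hypercube `[0,1]^n` and for any check-node
neighborhood `N ⊆ {1,…,n}`, at most one odd-sized subset `V ⊆ N` generates a cut,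
i.e. violates its parity-check constraint
`∑_{i∈V} x_i − ∑_{i∈N∖V} x_i ≤ |V| − 1`. -/
theorem at_most_one_cut_per_check_node
    (n : ℕ) (x : Fin n → ℝ) (hx : ∀ i, 0 ≤ x i ∧ x i ≤ 1)
    (N : Finset (Fin n)) (V₁ V₂ : Finset (Fin n))
    (hV₁ : V₁ ⊆ N) (hV₂ : V₂ ⊆ N)
    (hodd₁ : Odd V₁.card) (hodd₂ : Odd V₂.card)
    (hcut₁ : (∑ i ∈ V₁, x i) - (∑ i ∈ N \ V₁, x i) > (V₁.card : ℝ) - 1)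
    (hcut₂ : (∑ i ∈ V₂, x i) - (∑ i ∈ N \ V₂, x i) > (V₂.card : ℝ) - 1) :
    V₁ = V₂ := by
  by_contra hne
  -- the "slack" function
  set t : Finset (Fin n) → Fin n → ℝ :=
    fun V i => if i ∈ V then 1 - x i else x i with ht
  have key : ∀ V : Finset (Fin n), V ⊆ N →
      ((∑ i ∈ V, x i) - (∑ i ∈ N \ V, x i) > (V.card : ℝ) - 1) →
      (∑ i ∈ N, t V i) < 1 := by
    intro V hVN hc
    have hsplit : (∑ i ∈ N, t V i)
        = (∑ i ∈ N.filter (· ∈ V), (1 - x i)) + ∑ i ∈ N.filter (¬ · ∈ V), x i := by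
      rw [ht, Finset.sum_ite]
    have h1 : N.filter (· ∈ V) = V := by
      apply Finset.ext; intro i
      simp only [Finset.mem_filter]
      exact ⟨fun h => h.2, fun h => ⟨hVN h, h⟩⟩
    have h2 : N.filter (¬ · ∈ V) = N \ V := by
      apply Finset.ext; intro i
      simp [Finset.mem_filter, Finset.mem_sdiff]
    rw [hsplit, h1, h2, Finset.sum_sub_distrib, Finset.sum_const, nsmul_eq_mul, mul_one]
    linarith
  have k1 := key V₁ hV₁ hcut₁
  have k2 := key V₂ hV₂ hcut₂
  -- the symmetric difference
  set S : Finset (Fin n) := (V₁ \ V₂) ∪ (V₂ \ V₁) with hS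
  have hSN : S ⊆ N := by
    intro i hi
    rcases Finset.mem_union.1 hi with h | h
    · exact hV₁ (Finset.mem_sdiff.1 h).1
    · exact hV₂ (Finset.mem_sdiff.1 h).1
  have hcard : 2 ≤ S.card := by
    have hdisj : Disjoint (V₁ \ V₂) (V₂ \ V₁) :=
      Finset.disjoint_left.2 fun i h1 h2 =>
        (Finset.mem_sdiff.1 h1).2 (Finset.mem_sdiff.1 h2).1
    have hc : S.card = (V₁ \ V₂).card + (V₂ \ V₁).card :=
      Finset.card_union_of_disjoint hdisj
    have e1 : (V₁ \ V₂).card + (V₁ ∩ V₂).card = V₁.card :=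
      Finset.card_sdiff_add_card_inter V₁ V₂
    have e2 : (V₂ \ V₁).card + (V₂ ∩ V₁).card = V₂.card :=
      Finset.card_sdiff_add_card_inter V₂ V₁
    have e3 : (V₂ ∩ V₁).card = (V₁ ∩ V₂).card := by rw [Finset.inter_comm]
    have hne' : S.card ≠ 0 := by
      intro h0
      have hS0 : S = ∅ := Finset.card_eq_zero.1 h0
      have h12 : V₁ \ V₂ = ∅ := by
        apply Finset.eq_empty_of_forall_notMem
        intro i hi
        exact absurd (Finset.mem_union_left _ hi) (hS0 ▸ Finset.notMem_empty i)
      have h21 : V₂ \ V₁ = ∅ := by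
        apply Finset.eq_empty_of_forall_notMem
        intro i hi
        exact absurd (Finset.mem_union_right _ hi) (hS0 ▸ Finset.notMem_empty i)
      exact hne (Finset.Subset.antisymm
        (Finset.sdiff_eq_empty_iff_subset.1 h12)
        (Finset.sdiff_eq_empty_iff_subset.1 h21))
    obtain ⟨a, ha⟩ := hodd₁
    obtain ⟨b, hb⟩ := hodd₂
    omega
  -- each i ∈ S contributes exactly 1 to t V₁ i + t V₂ i
  have hsum1 : ∀ i ∈ S, t V₁ i + t V₂ i = 1 := by
    intro i hi
    rcases Finset.mem_union.1 hi with h | h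
    · obtain ⟨h1, h2⟩ := Finset.mem_sdiff.1 h
      simp [ht, h1, h2]
    · obtain ⟨h1, h2⟩ := Finset.mem_sdiff.1 h
      simp [ht, h1, h2]
  have hnonneg : ∀ i ∈ N, 0 ≤ t V₁ i + t V₂ i := by
    intro i _
    have := hx i
    rw [ht]
    dsimp only
    split <;> split <;> linarith [this.1, this.2]
  have hge : (2 : ℝ) ≤ ∑ i ∈ N, (t V₁ i + t V₂ i) := by
    have h1 : (∑ i ∈ S, (t V₁ i + t V₂ i)) = S.card := by
      rw [Finset.sum_congr rfl hsum1, Finset.sum_const, nsmul_eq_mul, mul_one]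
    have h2 : (∑ i ∈ S, (t V₁ i + t V₂ i)) ≤ ∑ i ∈ N, (t V₁ i + t V₂ i) :=
      Finset.sum_le_sum_of_subset_of_nonneg hSN (fun i hiN _ => hnonneg i hiN)
    have : (2 : ℝ) ≤ (S.card : ℝ) := by exact_mod_cast hcard
    linarith
  rw [Finset.sum_add_distrib] at hge
  linarith
end

section
/- Let n be a natural number, let x ∈ ℝ^n satisfy 0 ≤ x_i ≤ 1 for all i, let N ⊆ {1,…,n}, and let V ⊆ N have odd cardinality. If V generates a cut at x, then for every j ∈ V and every i ∈ N∖V one has x_i < x_j. Consequently, V consists exactly of the |V| largest-valued coordinates of x among the indices in N, with strict separation between V and N∖V. -/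
/-- If an odd-sized subset `V` of a check-node neighborhood `N` generates a cut at
a point `x` of the unit hypercube, then every coordinate of `x` indexed by `V` is
strictly larger than every coordinate indexed by `N ∖ V`; i.e. `V` consists of the
`|V|` largest-valued coordinates among the indices in `N`, with strict separation. -/
theorem cut_members_are_largest
    (n : ℕ) (x : Fin n → ℝ) (hx : ∀ i, 0 ≤ x i ∧ x i ≤ 1)
    (N : Finset (Fin n)) (V : Finset (Fin n)) (hVN : V ⊆ N)
    (hodd : Odd V.card)
    (hcut : (∑ i ∈ V, x i) - (∑ i ∈ N \ V, x i) > (V.card : ℝ) - 1) :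
    ∀ j ∈ V, ∀ i ∈ N \ V, x i < x j := by
  intro j hj i hi
  have hsumV : (∑ k ∈ V, x k) ≤ x j + ((V.card : ℝ) - 1) := by
    have hsplit : (∑ k ∈ V, x k) = x j + ∑ k ∈ V.erase j, x k := by
      rw [← Finset.add_sum_erase _ _ hj]
    rw [hsplit]
    have hb : (∑ k ∈ V.erase j, x k) ≤ ∑ k ∈ V.erase j, (1 : ℝ) :=
      Finset.sum_le_sum fun k _ => (hx k).2
    have hcard : (V.erase j).card = V.card - 1 := Finset.card_erase_of_mem hj
    have hpos : 1 ≤ V.card := Finset.card_pos.mpr ⟨j, hj⟩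
    have : (∑ k ∈ V.erase j, (1 : ℝ)) = (V.card : ℝ) - 1 := by
      rw [Finset.sum_const, nsmul_eq_mul, mul_one, hcard]
      push_cast [Nat.cast_sub hpos]
      ring
    linarith
  have hsumC : x i ≤ ∑ k ∈ N \ V, x k := by
    have : (∑ k ∈ N \ V, x k) = x i + ∑ k ∈ (N \ V).erase i, x k := by
      rw [← Finset.add_sum_erase _ _ hi]
    have hnn : 0 ≤ ∑ k ∈ (N \ V).erase i, x k :=
      Finset.sum_nonneg fun k _ => (hx k).1
    linarith
  linarith
end

section
/- Let n and m be natural numbers, let x ∈ ℝ^n satisfy 0 ≤ x_i ≤ 1 for all i, and for each j ∈ {1,…,m} let N_j ⊆ {1,…,n} be the neighborhood of the j-th check node. Then the total number of pairs (j, V), where j ∈ {1,…,m} and V ⊆ N_j has odd cardinality and ∑_{i∈V} x_i − ∑_{i∈N_j∖V} x_i > |V| − 1, is at most m. -/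
/-- At most one odd subset of `Nj` can violate its parity-check constraint. -/
lemma cut_unique {n : ℕ} (x : Fin n → ℝ) (hx : ∀ i, 0 ≤ x i ∧ x i ≤ 1)
    (Nj V W : Finset (Fin n)) (hV : V ⊆ Nj) (hW : W ⊆ Nj)
    (hVo : Odd V.card) (hWo : Odd W.card)
    (hVgt : (∑ i ∈ V, x i) - (∑ i ∈ Nj \ V, x i) > (V.card : ℝ) - 1)
    (hWgt : (∑ i ∈ W, x i) - (∑ i ∈ Nj \ W, x i) > (W.card : ℝ) - 1) :
    V = W := by
  by_contra hne
  -- decompose sums over the four regions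
  have split : ∀ s t : Finset (Fin n),
      ∑ i ∈ s, x i = ∑ i ∈ s ∩ t, x i + ∑ i ∈ s \ t, x i := by
    intro s t
    have h := Finset.sum_union (f := x) (Finset.disjoint_sdiff_inter s t)
    rw [Finset.sdiff_union_inter] at h
    rw [h]; ring
  have hNV : Nj \ V = (W \ V) ∪ (Nj \ (V ∪ W)) := by
    ext i
    simp only [Finset.mem_sdiff, Finset.mem_union]
    constructor
    · rintro ⟨hN, hnV⟩
      by_cases hiW : i ∈ W
      · exact Or.inl ⟨hiW, hnV⟩
      · exact Or.inr ⟨hN, by tauto⟩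
    · rintro (⟨hiW, hnV⟩ | ⟨hN, hn⟩)
      · exact ⟨hW hiW, hnV⟩
      · exact ⟨hN, fun h => hn (Or.inl h)⟩
  have hNW : Nj \ W = (V \ W) ∪ (Nj \ (V ∪ W)) := by
    ext i
    simp only [Finset.mem_sdiff, Finset.mem_union]
    constructor
    · rintro ⟨hN, hnW⟩
      by_cases hiV : i ∈ V
      · exact Or.inl ⟨hiV, hnW⟩
      · exact Or.inr ⟨hN, by tauto⟩
    · rintro (⟨hiV, hnW⟩ | ⟨hN, hn⟩)
      · exact ⟨hV hiV, hnW⟩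
      · exact ⟨hN, fun h => hn (Or.inr h)⟩
  have hdV : Disjoint (W \ V) (Nj \ (V ∪ W)) :=
    Finset.disjoint_left.2 fun i h1 h2 => by
      simp only [Finset.mem_sdiff, Finset.mem_union] at h1 h2; tauto
  have hdW : Disjoint (V \ W) (Nj \ (V ∪ W)) :=
    Finset.disjoint_left.2 fun i h1 h2 => by
      simp only [Finset.mem_sdiff, Finset.mem_union] at h1 h2; tauto
  set A := V ∩ W with hA
  set B := V \ W with hB
  set C := W \ V with hC
  set D := Nj \ (V ∪ W) with hD
  have eV : ∑ i ∈ V, x i = ∑ i ∈ A, x i + ∑ i ∈ B, x i := split V W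
  have eW : ∑ i ∈ W, x i = ∑ i ∈ A, x i + ∑ i ∈ C, x i := by
    rw [split W V, Finset.inter_comm]
  have eNV : ∑ i ∈ Nj \ V, x i = ∑ i ∈ C, x i + ∑ i ∈ D, x i := by
    rw [hNV, Finset.sum_union hdV]
  have eNW : ∑ i ∈ Nj \ W, x i = ∑ i ∈ B, x i + ∑ i ∈ D, x i := by
    rw [hNW, Finset.sum_union hdW]
  -- cardinalities
  have cV : V.card = A.card + B.card := (Finset.card_inter_add_card_sdiff V W).symm
  have cW : W.card = A.card + C.card := by
    rw [← Finset.card_inter_add_card_sdiff W V, Finset.inter_comm]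
  -- |B| + |C| ≥ 2
  have hBC : 2 ≤ B.card + C.card := by
    have hne' : B ≠ ∅ ∨ C ≠ ∅ := by
      by_contra h
      push_neg at h
      exact hne (Finset.Subset.antisymm
        (Finset.sdiff_eq_empty_iff_subset.1 h.1)
        (Finset.sdiff_eq_empty_iff_subset.1 h.2))
    have heven : Even (V.card + W.card) := hVo.add_odd hWo
    obtain ⟨k, hk⟩ := heven
    have hpos : 0 < B.card + C.card := by
      rcases hne' with h | h
      · have := Finset.card_pos.2 (Finset.nonempty_iff_ne_empty.2 h); omega
      · have := Finset.card_pos.2 (Finset.nonempty_iff_ne_empty.2 h); omega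
    omega
  -- sum bounds
  have hAle : ∑ i ∈ A, x i ≤ (A.card : ℝ) := by
    calc ∑ i ∈ A, x i ≤ ∑ _i ∈ A, (1 : ℝ) :=
          Finset.sum_le_sum fun i _ => (hx i).2
      _ = A.card := by simp
  have hDnn : 0 ≤ ∑ i ∈ D, x i := Finset.sum_nonneg fun i _ => (hx i).1
  -- combine
  have hsum : (V.card : ℝ) + W.card - 2 <
      2 * ∑ i ∈ A, x i - 2 * ∑ i ∈ D, x i := by
    have := add_lt_add hVgt hWgt
    rw [eV, eW, eNV, eNW] at this
    linarith
  have hlt : (V.card : ℝ) + W.card - 2 < 2 * A.card := by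
    have hb : 2 * ∑ i ∈ A, x i - 2 * ∑ i ∈ D, x i ≤ 2 * (A.card : ℝ) := by linarith
    linarith
  have hcV : (V.card : ℝ) = A.card + B.card := by exact_mod_cast cV
  have hcW : (W.card : ℝ) = A.card + C.card := by exact_mod_cast cW
  have hBC' : (2 : ℝ) ≤ (B.card : ℝ) + C.card := by exact_mod_cast hBC
  linarith

/-- For a code described by `m` check nodes with neighborhoods `N_1, …, N_m`,
at any point `x` of the unit hypercube the total number of cuts, i.e. pairs
`(j, V)` with `V ⊆ N_j` of odd cardinality violating its parity-check
constraint at `x`, is at most `m`. -/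
theorem total_number_of_cuts_le
    (n m : ℕ) (x : Fin n → ℝ) (hx : ∀ i, 0 ≤ x i ∧ x i ≤ 1)
    (N : Fin m → Finset (Fin n)) :
    {p : Fin m × Finset (Fin n) |
        p.2 ⊆ N p.1 ∧ Odd p.2.card ∧
        (∑ i ∈ p.2, x i) - (∑ i ∈ N p.1 \ p.2, x i) > (p.2.card : ℝ) - 1}.ncard
      ≤ m := by
  set S := {p : Fin m × Finset (Fin n) |
        p.2 ⊆ N p.1 ∧ Odd p.2.card ∧
        (∑ i ∈ p.2, x i) - (∑ i ∈ N p.1 \ p.2, x i) > (p.2.card : ℝ) - 1} with hS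
  have hinj : Set.InjOn Prod.fst S := by
    rintro ⟨j, V⟩ hV ⟨j', W⟩ hW (h : j = j')
    subst h
    obtain ⟨hVs, hVo, hVgt⟩ := hV
    obtain ⟨hWs, hWo, hWgt⟩ := hW
    exact Prod.ext rfl (cut_unique x hx (N j) V W hVs hWs hVo hWo hVgt hWgt)
  calc S.ncard = (Prod.fst '' S).ncard := (Set.ncard_image_of_injOn hinj).symm
    _ ≤ (Set.univ : Set (Fin m)).ncard :=
        Set.ncard_le_ncard (Set.subset_univ _) Set.finite_univ
    _ = m := by simp [Set.ncard_univ]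
end

section
/- Let n be a natural number, let N ⊆ {1,…,n}, and let x ∈ {0,1}^n. Then the following are equivalent: (a) for every subset V ⊆ N of odd cardinality, ∑_{i∈V} x_i − ∑_{i∈N∖V} x_i ≤ |V| − 1; (b) ∑_{i∈N} x_i is even. -/
/-- A 0/1 vector satisfies all parity-check constraints of a check node with
neighborhood `N` (i.e. `∑_{i∈V} x_i − ∑_{i∈N∖V} x_i ≤ |V| − 1` for every
odd-sized `V ⊆ N`) if and only if it satisfies the parity check, i.e.
`∑_{i∈N} x_i` is even. -/
theorem integral_point_satisfies_constraints_iff_parity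
    (n : ℕ) (N : Finset (Fin n)) (x : Fin n → ℝ)
    (hx : ∀ i, x i = 0 ∨ x i = 1) :
    (∀ V ⊆ N, Odd V.card →
        (∑ i ∈ V, x i) - (∑ i ∈ N \ V, x i) ≤ (V.card : ℝ) - 1)
      ↔ (∃ k : ℤ, (∑ i ∈ N, x i) = 2 * k) := by
  classical
  have key : ∀ W : Finset (Fin n),
      (∑ i ∈ W, x i) = ((W.filter (fun i => x i = 1)).card : ℝ) := by
    intro W
    have h1 : ∑ i ∈ W.filter (fun i => x i = 1), x i = ∑ i ∈ W, x i :=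
      Finset.sum_filter_of_ne (by
        intro i _ hne
        rcases hx i with h | h
        · exact absurd h hne
        · exact h)
    rw [← h1, Finset.sum_congr rfl (fun i hi => (Finset.mem_filter.mp hi).2),
      Finset.sum_const, nsmul_eq_mul, mul_one]
  set S := N.filter (fun i => x i = 1) with hSdef
  constructor
  · intro hcon
    have hScard : Even S.card := by
      by_contra hodd
      rw [Nat.not_even_iff_odd] at hodd
      have hsub : S ⊆ N := Finset.filter_subset _ _
      have h := hcon S hsub hodd
      have h1 : ∑ i ∈ S, x i = (S.card : ℝ) := by
        rw [key S]
        congr 1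
        rw [Finset.filter_filter]
        exact congrArg Finset.card (Finset.filter_congr (by tauto))
      have h2 : ∑ i ∈ N \ S, x i = 0 := by
        rw [key (N \ S)]
        norm_cast
        rw [Finset.card_eq_zero, Finset.filter_eq_empty_iff]
        intro i hi h1i
        exact (Finset.mem_sdiff.mp hi).2 (Finset.mem_filter.mpr ⟨(Finset.mem_sdiff.mp hi).1, h1i⟩)
      rw [h1, h2, sub_zero] at h
      linarith
    obtain ⟨m, hm⟩ := hScard
    refine ⟨m, ?_⟩
    rw [key N]
    have : (N.filter (fun i => x i = 1)).card = S.card := rfl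
    rw [this, hm]
    push_cast
    ring
  · intro ⟨k, hk⟩ V hV hodd
    have hScard : Even S.card := by
      have : ((S.card : ℤ) : ℝ) = ((2 * k : ℤ) : ℝ) := by
        push_cast
        rw [← key N]
        linarith [hk]
      have := Int.cast_injective (α := ℝ) this
      exact ⟨k.toNat, by omega⟩
    rw [key V, key (N \ V)]
    set a := (V.filter (fun i => x i = 1)).card with ha
    set b := ((N \ V).filter (fun i => x i = 1)).card with hb
    have hab : a + b = S.card := by
      rw [ha, hb, hSdef, ← Finset.card_union_of_disjoint, ← Finset.filter_union,
        Finset.union_sdiff_of_subset hV]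
      exact Finset.disjoint_filter_filter (Finset.disjoint_sdiff)
    have haV : a ≤ V.card := Finset.card_le_card (Finset.filter_subset _ _)
    obtain ⟨s, hs⟩ := hScard
    obtain ⟨t, ht⟩ := hodd
    have hnat : a + 1 ≤ V.card + b := by omega
    have : ((a : ℝ)) + 1 ≤ (V.card : ℝ) + b := by exact_mod_cast hnat
    linarith [hk]
end
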